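/- Let F be any field, G any finite group, X a finite transitive G-set, and f a nonzero element of the permutation module F X. The equality |supp(f)| · dim_F (F G·f) = |X| holds if and only if: S := supp(f) is a block of X, so that for a fixed x₀ ∈ S the preimage 𝒮 = ζ_{x₀}⁻¹(S) is a subgroup of G, and there exists a group homomorphism η: 𝒮 → Fˣ such that β·f = η(β)·f for all β ∈ 𝒮. -/

import Mathlib

/-!
Write `S = supp f`. Pick a basis `B` of `F G·f` among the translates `α·f`. The support of each
element of `B` has `|S|` elements and, by transitivity, these supports cover `X`; hence
`|X| ≤ |S|·dim F G·f`, with equality exactly when the supports of `B` are pairwise disjoint. Then a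
translate, lying in the span of `B` and having `|S|` elements in its support, is a multiple of a
single element of `B`, so every translate of `f` is either a multiple of `f` or supported away from
`S`; conversely this dichotomy makes the supports of distinct elements of `B` disjoint. The
dichotomy says precisely that `S` is a block on whose stabiliser `f` transforms by scalars, and
these scalars form a character because they are uniquely determined.
-/

open Pointwise

theorem Finset.pairwiseDisjoint_of_card_biUnion_eq_sum {ι α : Type*} [DecidableEq ι]
    [DecidableEq α] {s : Finset ι} {t : ι → Finset α}
    (h : (s.biUnion t).card = ∑ i ∈ s, (t i).card) : (s : Set ι).PairwiseDisjoint t := by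
  intro i hi j hj hij
  by_contra hij'
  obtain ⟨x, hxi, hxj⟩ := Finset.not_disjoint_iff.1 hij'
  have hx : x ∈ (s.erase j).biUnion t ∩ t j :=
    mem_inter.2 ⟨mem_biUnion.2 ⟨i, mem_erase.2 ⟨hij, hi⟩, hxi⟩, hxj⟩
  have hunion : s.biUnion t = (s.erase j).biUnion t ∪ t j := by
    rw [union_comm, ← biUnion_insert, insert_erase hj]
  have hle : ((s.erase j).biUnion t).card ≤ ∑ i ∈ s.erase j, (t i).card := card_biUnion_le
  have hinter := card_union_add_card_inter ((s.erase j).biUnion t) (t j)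
  have hpos := card_pos.2 ⟨x, hx⟩
  rw [hunion, ← sum_erase_add _ _ hj] at h
  omega

namespace Finsupp

theorem support_subset_biUnion_of_mem_span {X R M : Type*} [DecidableEq X] [Semiring R]
    [AddCommMonoid M] [Module R M] {B : Finset (X →₀ M)} {v : X →₀ M}
    (hv : v ∈ Submodule.span R (B : Set (X →₀ M))) : v.support ⊆ B.biUnion support := by
  have : Submodule.span R (B : Set (X →₀ M)) ≤ supported M R (B.biUnion support : Set X) :=
    Submodule.span_le.2 fun b hb => (mem_supported R b).2 <|
      Finset.coe_subset.2 <| Finset.subset_biUnion_of_mem support hb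
  exact Finset.coe_subset.1 (this hv)

variable {X F : Type*} [DivisionRing F]

theorem exists_eq_smul_of_mem_span_of_pairwiseDisjoint {B : Finset (X →₀ F)}
    (hB : (B : Set (X →₀ F)).PairwiseDisjoint support) {s : ℕ}
    (hBcard : ∀ b ∈ B, b.support.card = s) (hs : 0 < s) {v : X →₀ F}
    (hv : v ∈ Submodule.span F (B : Set (X →₀ F))) (hvcard : v.support.card = s) :
    ∃ b ∈ B, ∃ c : Fˣ, v = (c : F) • b := by
  classical
  obtain ⟨c, hcv⟩ := Submodule.mem_span_finset'.1 hv
  have hdisj : ∀ a₁ a₂ : B, a₁ ≠ a₂ →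
      Disjoint (c a₁ • (a₁ : X →₀ F)).support (c a₂ • (a₂ : X →₀ F)).support :=
    fun a₁ a₂ h => (hB a₁.2 a₂.2 (Subtype.coe_ne_coe.2 h)).mono
      support_smul support_smul
  have hcard : v.support.card = (Finset.univ.filter fun a : B => c a ≠ 0).card * s := by
    rw [← hcv, support_sum_eq_biUnion _ hdisj,
      Finset.card_biUnion fun a₁ _ a₂ _ h => hdisj a₁ a₂ h, Finset.card_filter, Finset.sum_mul]
    refine Finset.sum_congr rfl fun a _ => ?_
    by_cases ha : c a = 0
    · simp [ha]
    · simp [ha, support_smul_eq ha, hBcard a a.2]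
  obtain ⟨a, ha⟩ := Finset.card_eq_one.1 <|
    Nat.eq_of_mul_eq_mul_right hs (hcard.symm.trans (hvcard.trans (one_mul s).symm))
  have hca : c a ≠ 0 := by simpa using Finset.ext_iff.1 ha a
  refine ⟨a, a.2, Units.mk0 _ hca, ?_⟩
  rw [← hcv, Finset.sum_eq_single a (fun a' _ h => ?_) (by simp), Units.val_mk0]
  have hca' : c a' = 0 := by simpa [h] using Finset.ext_iff.1 ha a'
  rw [hca', zero_smul]

end Finsupp

open Finsupp MulAction Submodule

section PermutationModule

attribute [local instance] Finsupp.comapSMul Finsupp.comapMulAction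

namespace Finsupp

variable {G X F : Type*} [Group G] [MulAction G X]

theorem coeff_ofMulAction_ofCoeff [Semiring F] (α : G) (f : X →₀ F) :
    (Representation.ofMulAction F G X α (MonoidAlgebra.ofCoeff f)).coeff = α • f :=
  rfl

variable {M : Type*} [AddCommMonoid M]

theorem coe_support_comapSMul (α : G) (f : X →₀ M) :
    ((α • f).support : Set X) = α • (f.support : Set X) := by
  classical
  rw [comapSMul_def, mapDomain_support_of_injective (MulAction.injective α), Finset.coe_image]
  rfl

theorem card_support_comapSMul (α : G) (f : X →₀ M) : (α • f).support.card = f.support.card := by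
  rw [← Set.ncard_coe_finset, coe_support_comapSMul, Set.ncard_smul_set, Set.ncard_coe_finset]

theorem comapSMul_smul_comm {R : Type*} [DistribSMul R M] (α : G) (c : R) (f : X →₀ M) :
    α • (c • f) = c • (α • f) :=
  mapDomain_smul c f

end Finsupp

def TranslatesProportionalOrDisjoint (G : Type*) {X F : Type*} [Group G] [MulAction G X]
    [Semiring F] (f : X →₀ F) : Prop :=
  ∀ α : G, (∃ c : Fˣ, α • f = (c : F) • f) ∨ Disjoint (α • (f.support : Set X)) f.support

variable {G X F : Type*} [Group G] [MulAction G X]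

namespace TranslatesProportionalOrDisjoint

theorem isBlock [DivisionRing F] {f : X →₀ F} (hP : TranslatesProportionalOrDisjoint G f) :
    IsBlock G (f.support : Set X) := by
  refine isBlock_iff_smul_eq_or_disjoint.2 fun α => (hP α).imp ?_ id
  rintro ⟨c, hc⟩
  rw [← coe_support_comapSMul, hc, support_smul_eq c.ne_zero]

theorem exists_character [Field F] {f : X →₀ F} (hP : TranslatesProportionalOrDisjoint G f)
    {x₀ : X} (hx₀ : x₀ ∈ f.support) :
    ∃ η : G → Fˣ,
      (∀ β γ : G, β • x₀ ∈ (f.support : Set X) → γ • x₀ ∈ (f.support : Set X) →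
        η (β * γ) = η β * η γ) ∧
      ∀ β : G, β • x₀ ∈ (f.support : Set X) → β • f = (η β : F) • f := by
  have hsmul : ∀ β : G, β • x₀ ∈ (f.support : Set X) → ∃ c : Fˣ, β • f = (c : F) • f :=
    fun β hβ => (hP β).resolve_right fun hdisj =>
      Set.disjoint_left.1 hdisj (Set.smul_mem_smul_set hx₀) hβ
  choose! η hη using hsmul
  have hstab : ∀ β : G, β • x₀ ∈ (f.support : Set X) → β • (f.support : Set X) = f.support :=
    fun β hβ => by rw [← coe_support_comapSMul, hη β hβ, support_smul_eq (η β).ne_zero]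
  refine ⟨η, fun β γ hβ hγ => ?_, hη⟩
  have hmem : (β * γ) • x₀ ∈ (f.support : Set X) := by
    rw [← hstab β hβ, ← hstab γ hγ, smul_smul]
    exact Set.smul_mem_smul_set hx₀
  have hf : f ≠ 0 := support_nonempty_iff.1 ⟨x₀, hx₀⟩
  refine Units.ext (smul_left_injective F hf ((hη _ hmem).symm.trans ?_))
  rw [mul_smul, hη γ hγ, comapSMul_smul_comm, hη β hβ, smul_smul, Units.val_mul, mul_comm]

end TranslatesProportionalOrDisjoint

theorem translatesProportionalOrDisjoint_of_isBlock [DivisionRing F] {f : X →₀ F}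
    (hB : IsBlock G (f.support : Set X)) {x₀ : X} (hx₀ : x₀ ∈ f.support)
    (hη : ∀ β : G, β • x₀ ∈ (f.support : Set X) → ∃ c : Fˣ, β • f = (c : F) • f) :
    TranslatesProportionalOrDisjoint G f := by
  refine fun α => (isBlock_iff_smul_eq_or_disjoint.1 hB α).imp (fun h => hη α ?_) id
  rw [← h]
  exact Set.smul_mem_smul_set hx₀

section Translates

variable [DivisionRing F] {f : X →₀ F} {B : Finset (X →₀ F)}

theorem biUnion_support_eq_univ_of_translates_mem_span [DecidableEq X] [Fintype X]
    [IsPretransitive G X] (hf : f ≠ 0) (hB : ∀ α : G, α • f ∈ span F (B : Set (X →₀ F))) :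
    B.biUnion support = Finset.univ := by
  refine Finset.eq_univ_of_forall fun x => ?_
  obtain ⟨x₀, hx₀⟩ := support_nonempty_iff.2 hf
  obtain ⟨α, rfl⟩ := exists_smul_eq G x₀ x
  refine support_subset_biUnion_of_mem_span (hB α) ?_
  rw [← Finset.mem_coe, coe_support_comapSMul]
  exact Set.smul_mem_smul_set hx₀

theorem TranslatesProportionalOrDisjoint.pairwiseDisjoint_support
    (hP : TranslatesProportionalOrDisjoint G f)
    (hBsub : (B : Set (X →₀ F)) ⊆ Set.range fun α : G => α • f)
    (hBli : LinearIndepOn F id (B : Set (X →₀ F))) :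
    (B : Set (X →₀ F)).PairwiseDisjoint support := by
  intro b hb b' hb' hne
  obtain ⟨α, rfl⟩ := hBsub hb
  obtain ⟨β, rfl⟩ := hBsub hb'
  rcases hP (α⁻¹ * β) with ⟨c, hc⟩ | hdisj
  · refine absurd ?_ ((linearIndepOn_pair_iff id hne (hBli.ne_zero hb)).1
      (hBli.mono (Set.pair_subset hb hb')) c)
    show (c : F) • α • f = β • f
    rw [← mul_inv_cancel_left α β, mul_smul, hc, comapSMul_smul_comm]
  · rw [Function.onFun, ← Finset.disjoint_coe, coe_support_comapSMul, coe_support_comapSMul]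
    have := (Set.disjoint_smul_set (a := α)).2 hdisj
    rwa [smul_smul, mul_inv_cancel_left, disjoint_comm] at this

theorem translatesProportionalOrDisjoint_of_pairwiseDisjoint_support (hf : f ≠ 0)
    (hBsub : (B : Set (X →₀ F)) ⊆ Set.range fun α : G => α • f)
    (hBdisj : (B : Set (X →₀ F)).PairwiseDisjoint support)
    (hB : ∀ α : G, α • f ∈ span F (B : Set (X →₀ F))) :
    TranslatesProportionalOrDisjoint G f := by
  have hBcard : ∀ b ∈ B, b.support.card = f.support.card := fun b hb => by
    obtain ⟨α, rfl⟩ := hBsub hb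
    exact card_support_comapSMul α f
  have hmultiple : ∀ γ : G, ∃ b ∈ B, ∃ c : Fˣ, γ • f = (c : F) • b := fun γ =>
    exists_eq_smul_of_mem_span_of_pairwiseDisjoint hBdisj hBcard
      (Finset.card_pos.2 (support_nonempty_iff.2 hf)) (hB γ) (card_support_comapSMul γ f)
  intro α
  obtain ⟨b, hb, c, hc⟩ := hmultiple α
  obtain ⟨b₀, hb₀, c₀, hc₀⟩ := hmultiple 1
  rw [one_smul] at hc₀
  by_cases hbb₀ : b = b₀
  · refine .inl ⟨c * c₀⁻¹, ?_⟩
    rw [hc, hc₀, hbb₀, smul_smul, Units.val_mul, mul_assoc, ← Units.val_mul, inv_mul_cancel,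
      Units.val_one, mul_one]
  · refine .inr ?_
    rw [← coe_support_comapSMul, hc, support_smul_eq c.ne_zero, hc₀, support_smul_eq c₀.ne_zero,
      Finset.disjoint_coe]
    exact hBdisj hb hb₀ hbb₀

end Translates

theorem card_support_mul_finrank_span_translates_eq_card_iff [Finite G] [Fintype X]
    [IsPretransitive G X] [DivisionRing F] {f : X →₀ F} (hf : f ≠ 0) :
    f.support.card * Module.finrank F (span F (Set.range fun α : G => α • f)) = Fintype.card X ↔
      TranslatesProportionalOrDisjoint G f := by
  classical
  obtain ⟨b, hbsub, hbspan, hbli⟩ := exists_linearIndependent F (Set.range fun α : G => α • f)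
  obtain ⟨B, rfl⟩ := ((Set.finite_range _).subset hbsub).exists_finset_coe
  have hB : ∀ α : G, α • f ∈ span F (B : Set (X →₀ F)) :=
    fun α => hbspan ▸ subset_span ⟨α, rfl⟩
  have hsum : ∑ b ∈ B, b.support.card = B.card * f.support.card := by
    refine Finset.sum_const_nat fun b hb => ?_
    obtain ⟨α, rfl⟩ := hbsub hb
    exact card_support_comapSMul α f
  -- The supports of `B` cover `X`, so the equation says they are pairwise disjoint.
  rw [← hbspan, finrank_span_finset_eq_card hbli, ← Finset.card_univ,
    ← biUnion_support_eq_univ_of_translates_mem_span hf hB, mul_comm, ← hsum]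
  exact ⟨fun h => translatesProportionalOrDisjoint_of_pairwiseDisjoint_support hf hbsub
      (Finset.pairwiseDisjoint_of_card_biUnion_eq_sum h.symm) hB,
    fun hP => (Finset.card_biUnion (hP.pairwiseDisjoint_support hbsub hbli)).symm⟩

end PermutationModule

theorem stmt11 {G X F : Type*} [Group G] [Fintype G] [MulAction G X] [Fintype X]
    [MulAction.IsPretransitive G X] [Field F]
    (f : X →₀ F) (hf : f ≠ 0) :
    f.support.card *
        Module.finrank F (Submodule.span F
          (Set.range fun α : G => (Representation.ofMulAction F G X α (MonoidAlgebra.ofCoeff f)).coeff))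
      = Fintype.card X ↔
    ((∀ α β : G, α • (f.support : Set X) = β • (f.support : Set X) ∨
        (α • (f.support : Set X)) ∩ (β • (f.support : Set X)) = ∅) ∧
      ∀ x₀ : X, f x₀ ≠ 0 →
        ∃ η : G → Fˣ,
          (∀ β γ : G, β • x₀ ∈ (f.support : Set X) → γ • x₀ ∈ (f.support : Set X) →
            η (β * γ) = η β * η γ) ∧
          ∀ β : G, β • x₀ ∈ (f.support : Set X) →
            (Representation.ofMulAction F G X β (MonoidAlgebra.ofCoeff f)).coeff = (η β : F) • f) := by
  rw [funext (coeff_ofMulAction_ofCoeff (F := F) · f),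
    card_support_mul_finrank_span_translates_eq_card_iff hf]
  simp only [coeff_ofMulAction_ofCoeff, ← Set.disjoint_iff_inter_eq_empty,
    ← isBlock_iff_smul_eq_smul_or_disjoint]
  constructor
  · exact fun hP => ⟨hP.isBlock, fun x₀ hx₀ => hP.exists_character (mem_support_iff.2 hx₀)⟩
  · rintro ⟨hblock, hchar⟩
    obtain ⟨x₀, hx₀⟩ := support_nonempty_iff.2 hf
    obtain ⟨η, -, hη⟩ := hchar x₀ (mem_support_iff.1 hx₀)
    exact translatesProportionalOrDisjoint_of_isBlock hblock hx₀ fun β hβ => ⟨η β, hη β hβ⟩
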